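/- Efron–Stein variance bound for the constrained ground-state energies: for every γ > 0 and every even n, with (z_{ij})_{1≤i,j≤n} i.i.d. Poisson(γ/n), both U₋ = min_{σ∈Ω_n} ( −Σ_{i,j=1}^n z_{ij} σ_i σ_j ) and U₊ = max_{σ∈Ω_n} ( −Σ_{i,j=1}^n z_{ij} σ_i σ_j ) satisfy Var(U₋) ≤ nγ and Var(U₊) ≤ nγ. -/

import Mathlib

open MeasureTheory Filter Finset

/-- The real value (±1) of a Boolean spin. -/
noncomputable def spin (b : Bool) : ℝ := if b then 1 else -1

/-- The law of the i.i.d. Poisson(γ/n) multiplicities `(z_{ij})_{1≤i,j≤n}`. -/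
noncomputable def poissonProd (n : ℕ) (γ : ℝ) : Measure ((Fin n × Fin n) → ℕ) :=
  Measure.pi fun _ => ProbabilityTheory.poissonMeasure (Real.toNNReal (γ / n))

/-- `σ ∈ Ω_n`: the spin configuration is balanced (zero magnetization). -/
def balanced {n : ℕ} (σ : Fin n → Bool) : Prop :=
  2 * (Finset.univ.filter fun i => σ i = true).card = n

/-- The diluted Ising Hamiltonian `−Σ_{i,j} z_{ij} σ_i σ_j`. -/
noncomputable def HD {n : ℕ} (z : Fin n × Fin n → ℕ) (σ : Fin n → Bool) : ℝ :=
  -∑ p : Fin n × Fin n, (z p : ℝ) * spin (σ p.1) * spin (σ p.2)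

/-- The constrained ground-state energy `U₋ = min_{σ∈Ω_n} (−Σ z_{ij} σ_i σ_j)`. -/
noncomputable def Uminus {n : ℕ} (z : Fin n × Fin n → ℕ) : ℝ :=
  sInf {x : ℝ | ∃ σ : Fin n → Bool, balanced σ ∧ HD z σ = x}

/-- The constrained maximal energy `U₊ = max_{σ∈Ω_n} (−Σ z_{ij} σ_i σ_j)`. -/
noncomputable def Uplus {n : ℕ} (z : Fin n × Fin n → ℕ) : ℝ :=
  sSup {x : ℝ | ∃ σ : Fin n → Bool, balanced σ ∧ HD z σ = x}

/-!
For one coordinate: if `|f a - f b| ≤ |g a - g b|`, then for independent copies `X, X'`,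
`2 Var f(X) = E (f X - f X')² ≤ E (g X - g X')² = 2 Var g(X)`. For a function of independent
coordinates that is `ℓ¹`-Lipschitz in this sense, the law of total variance splits off one
coordinate: the sections have variance at most `Var g`, and the conditional mean is again
Lipschitz, so by induction the variance is at most `(#coordinates) · Var g`. Under Poisson(γ/n)
the identity has variance `γ/n`, and there are `n²` coordinates. Finally `U₋` and `U₊` are a
minimum and a maximum of the energies `−Σ z_{ij} σ_i σ_j`, each of which is `ℓ¹`-Lipschitz in `z`
because `|σ_i σ_j| = 1`.
-/

open ProbabilityTheory Real
open scoped NNReal ENNReal Nat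

namespace ProbabilityTheory

variable {r : ℝ≥0}

/-- The Poisson weights satisfy `n · w(n) = r · w(n - 1)`. -/
lemma hasSum_poissonMeasure_mul_cast {f : ℕ → ℝ} {S : ℝ}
    (h : HasSum (fun n ↦ exp (-r) * r ^ n / n ! * f (n + 1)) S) :
    HasSum (fun n ↦ exp (-r) * r ^ n / n ! * (n * f n)) (r * S) := by
  rw [← hasSum_nat_add_iff' 1]
  simp only [Finset.range_one, Finset.sum_singleton, Nat.cast_zero, zero_mul, mul_zero, sub_zero]
  refine (h.mul_left (r : ℝ)).congr_fun fun n ↦ ?_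
  rw [Nat.factorial_succ, pow_succ]
  push_cast
  field_simp

lemma hasSum_poissonMeasure_cast : HasSum (fun n : ℕ ↦ exp (-r) * r ^ n / n ! * n) r := by
  simpa only [mul_one] using hasSum_poissonMeasure_mul_cast (f := fun _ ↦ 1) (S := 1)
    (by simpa only [mul_one] using hasSum_one_poissonMeasure r)

lemma hasSum_poissonMeasure_cast_sq :
    HasSum (fun n : ℕ ↦ exp (-r) * r ^ n / n ! * (n : ℝ) ^ 2) (r ^ 2 + r) := by
  have hfactorial : HasSum (fun n : ℕ ↦ exp (-r) * r ^ n / n ! * (n * ((n : ℝ) - 1))) (r * r) :=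
    hasSum_poissonMeasure_mul_cast (by simpa using hasSum_poissonMeasure_cast)
  convert hfactorial.add hasSum_poissonMeasure_cast using 1
  · ext n; ring
  · ring

lemma integrable_poissonMeasure_of_hasSum {f : ℕ → ℝ} {S : ℝ} (hf : ∀ n, 0 ≤ f n)
    (h : HasSum (fun n ↦ exp (-r) * r ^ n / n ! * f n) S) :
    Integrable f Po(r) ∧ ∫ n, f n ∂Po(r) = S := by
  refine ⟨integrable_poissonMeasure_iff.2 ?_, ?_⟩
  · simpa only [Real.norm_eq_abs, abs_of_nonneg (hf _)] using h.summable
  · simpa only [integral_poissonMeasure, smul_eq_mul] using h.tsum_eq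

lemma memLp_two_poissonMeasure_cast : MemLp (fun n : ℕ ↦ (n : ℝ)) 2 Po(r) :=
  (memLp_two_iff_integrable_sq .of_discrete).2
    (integrable_poissonMeasure_of_hasSum (fun _ ↦ by positivity) hasSum_poissonMeasure_cast_sq).1

lemma variance_poissonMeasure_cast : Var[fun n : ℕ ↦ (n : ℝ); Po(r)] = r := by
  rw [variance_eq_sub memLp_two_poissonMeasure_cast, Pi.pow_def,
    (integrable_poissonMeasure_of_hasSum (fun _ ↦ by positivity) hasSum_poissonMeasure_cast_sq).2,
    (integrable_poissonMeasure_of_hasSum (fun _ ↦ by positivity) hasSum_poissonMeasure_cast).2]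
  ring

section Variance

variable {Ω Ω' : Type*} [MeasurableSpace Ω] [MeasurableSpace Ω'] {μ : Measure Ω}

lemma memLp_of_abs_sub_le [IsFiniteMeasure μ] {p : ℝ≥0∞} {f G : Ω → ℝ} (ω₀ : Ω)
    (hG : MemLp G p μ) (hf : AEStronglyMeasurable f μ) (h : ∀ ω, |f ω - f ω₀| ≤ G ω) :
    MemLp f p μ := by
  refine ((memLp_const |f ω₀|).add hG).of_le hf (ae_of_all _ fun ω ↦ ?_)
  have hG₀ : 0 ≤ G ω := (abs_nonneg _).trans (h ω)
  rw [Real.norm_eq_abs, Real.norm_eq_abs, Pi.add_apply,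
    abs_of_nonneg (add_nonneg (abs_nonneg _) hG₀)]
  linarith [abs_sub_abs_le_abs_sub (f ω) (f ω₀), h ω]

variable [IsProbabilityMeasure μ] {f g : Ω → ℝ}

lemma memLp_prod_sub (hg : MemLp g 2 μ) :
    MemLp (fun p : Ω × Ω ↦ g p.1 - g p.2) 2 (μ.prod μ) :=
  (hg.comp_fst μ).sub (hg.comp_snd μ)

lemma integral_prod_sub_sq (hg : MemLp g 2 μ) :
    ∫ p, (g p.1 - g p.2) ^ 2 ∂(μ.prod μ) = 2 * Var[g; μ] := by
  have hmean : ∫ p, (g p.1 - g p.2) ∂(μ.prod μ) = 0 := by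
    rw [integral_sub ((hg.integrable one_le_two).comp_fst μ)
      ((hg.integrable one_le_two).comp_snd μ), integral_fun_fst, integral_fun_snd]
    simp
  rw [← variance_of_integral_eq_zero (memLp_prod_sub hg).aestronglyMeasurable.aemeasurable hmean,
    show (fun p : Ω × Ω ↦ g p.1 - g p.2) = fun p ↦ g p.1 + (-g) p.2 from
      funext fun _ ↦ sub_eq_add_neg _ _, variance_add_prod hg hg.neg, variance_neg]
  ring

lemma memLp_of_abs_sub_le_abs_sub (hg : MemLp g 2 μ) (hf : AEStronglyMeasurable f μ)
    (hfg : ∀ a b, |f a - f b| ≤ |g a - g b|) : MemLp f 2 μ := by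
  obtain ⟨ω₀⟩ := nonempty_of_isProbabilityMeasure μ
  exact memLp_of_abs_sub_le ω₀ (hg.sub (memLp_const (g ω₀))).norm hf fun ω ↦ hfg ω ω₀

lemma variance_le_of_abs_sub_le_abs_sub (hg : MemLp g 2 μ) (hf : AEStronglyMeasurable f μ)
    (hfg : ∀ a b, |f a - f b| ≤ |g a - g b|) : Var[f; μ] ≤ Var[g; μ] := by
  have hf2 := memLp_of_abs_sub_le_abs_sub hg hf hfg
  suffices ∫ p, (f p.1 - f p.2) ^ 2 ∂(μ.prod μ) ≤ ∫ p, (g p.1 - g p.2) ^ 2 ∂(μ.prod μ) by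
    rw [integral_prod_sub_sq hf2, integral_prod_sub_sq hg] at this
    linarith
  refine integral_mono (memLp_prod_sub hf2).integrable_sq (memLp_prod_sub hg).integrable_sq
    fun p ↦ ?_
  simpa only [sq_abs] using pow_le_pow_left₀ (abs_nonneg _) (hfg p.1 p.2) 2

lemma abs_integral_sub_integral_le {f₁ f₂ : Ω → ℝ} {c : ℝ} (h₁ : Integrable f₁ μ)
    (h₂ : Integrable f₂ μ) (h : ∀ ω, |f₁ ω - f₂ ω| ≤ c) :
    |∫ ω, f₁ ω ∂μ - ∫ ω, f₂ ω ∂μ| ≤ c := by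
  rw [← integral_sub h₁ h₂]
  simpa using norm_integral_le_of_norm_le_const (μ := μ) (f := fun ω ↦ f₁ ω - f₂ ω) (ae_of_all μ h)

lemma variance_prod_eq_integral_variance_add_variance {ν : Measure Ω'} [IsProbabilityMeasure ν]
    {F : Ω × Ω' → ℝ} (hF : MemLp F 2 (μ.prod ν)) (hsec : ∀ y, MemLp (fun x ↦ F (x, y)) 2 μ)
    (hmean : MemLp (fun y ↦ ∫ x, F (x, y) ∂μ) 2 ν) :
    Var[F; μ.prod ν] = ∫ y, Var[fun x ↦ F (x, y); μ] ∂ν + Var[fun y ↦ ∫ x, F (x, y) ∂μ; ν] := by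
  have hF2 : Integrable (fun p ↦ F p ^ 2) (μ.prod ν) := hF.integrable_sq
  simp_rw [variance_eq_sub hF, variance_eq_sub hmean, variance_eq_sub (hsec _), Pi.pow_apply]
  rw [integral_sub hF2.integral_prod_right hmean.integrable_sq, integral_prod_symm _ hF2,
    integral_prod_symm _ (hF.integrable one_le_two)]
  ring

lemma variance_prod_le_add_variance_integral {ν : Measure Ω'} [IsProbabilityMeasure ν]
    {F : Ω × Ω' → ℝ} {c : ℝ} (hF : MemLp F 2 (μ.prod ν))
    (hsec : ∀ y, MemLp (fun x ↦ F (x, y)) 2 μ) (hmean : MemLp (fun y ↦ ∫ x, F (x, y) ∂μ) 2 ν)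
    (hc : ∀ y, Var[fun x ↦ F (x, y); μ] ≤ c) :
    Var[F; μ.prod ν] ≤ c + Var[fun y ↦ ∫ x, F (x, y) ∂μ; ν] := by
  rw [variance_prod_eq_integral_variance_add_variance hF hsec hmean]
  gcongr
  refine (le_abs_self _).trans ?_
  simpa using norm_integral_le_of_norm_le_const (μ := ν) (f := fun y ↦ Var[fun x ↦ F (x, y); μ])
    (ae_of_all _ fun y ↦ by simpa [abs_of_nonneg (variance_nonneg _ _)] using hc y)

end Variance

section Tensorization

variable {α : Type*} [MeasurableSpace α] {μ : Measure α}

lemma measurePreserving_finCons [SigmaFinite μ] (m : ℕ) :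
    MeasurePreserving (fun p : α × (Fin m → α) ↦ (Fin.cons p.1 p.2 : Fin (m + 1) → α))
      (μ.prod (Measure.pi fun _ ↦ μ)) (Measure.pi fun _ ↦ μ) := by
  convert (measurePreserving_piFinSuccAbove (fun _ : Fin (m + 1) ↦ μ) 0).symm
  funext p
  simp

variable [IsProbabilityMeasure μ] {g : α → ℝ}

lemma memLp_pi_of_abs_sub_le_sum {ι : Type*} [Fintype ι] (hg : MemLp g 2 μ)
    {f : (ι → α) → ℝ} (hf : AEStronglyMeasurable f (Measure.pi fun _ ↦ μ))
    (hfg : ∀ x y, |f x - f y| ≤ ∑ i, |g (x i) - g (y i)|) :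
    MemLp f 2 (Measure.pi fun _ ↦ μ) := by
  obtain ⟨a₀⟩ := nonempty_of_isProbabilityMeasure μ
  refine memLp_of_abs_sub_le (fun _ ↦ a₀) (memLp_finsetSum _ fun i _ ↦ ?_) hf fun x ↦ hfg x _
  exact ((hg.sub (memLp_const (g a₀))).norm).comp_measurePreserving (measurePreserving_eval _ i)

lemma variance_pi_fin_le_of_abs_sub_le_sum (hg : MemLp g 2 μ) :
    ∀ (m : ℕ) (f : (Fin m → α) → ℝ), Measurable f →
      (∀ x y, |f x - f y| ≤ ∑ i, |g (x i) - g (y i)|) →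
      Var[f; Measure.pi fun _ ↦ μ] ≤ m * Var[g; μ]
  | 0, f, _, _ => by
    have hconst : f = fun _ ↦ f isEmptyElim := funext fun x ↦ congrArg f (Subsingleton.elim _ _)
    rw [hconst, variance_eq_integral aemeasurable_const]
    simp
  | m + 1, f, hf, hfg => by
    set ν := Measure.pi fun _ : Fin m ↦ μ
    have hmp := measurePreserving_finCons (μ := μ) m
    set F : α × (Fin m → α) → ℝ := fun p ↦ f (Fin.cons p.1 p.2)
    have hF : Measurable F := hf.comp hmp.measurable
    have hFg (a b : α) (y y' : Fin m → α) :
        |F (a, y) - F (b, y')| ≤ |g a - g b| + ∑ j, |g (y j) - g (y' j)| := by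
      simpa [F, Fin.sum_univ_succ] using hfg (Fin.cons a y) (Fin.cons b y')
    have hsec (y : Fin m → α) (a b : α) : |F (a, y) - F (b, y)| ≤ |g a - g b| := by
      simpa using hFg a b y y
    have hsecm (y : Fin m → α) : AEStronglyMeasurable (fun a ↦ F (a, y)) μ :=
      (hF.comp measurable_prodMk_right).aestronglyMeasurable
    have hsecLp (y : Fin m → α) : MemLp (fun a ↦ F (a, y)) 2 μ :=
      memLp_of_abs_sub_le_abs_sub hg (hsecm y) (hsec y)
    set G : (Fin m → α) → ℝ := fun y ↦ ∫ a, F (a, y) ∂μ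
    have hG : Measurable G := hF.stronglyMeasurable.integral_prod_left'.measurable
    have hGg (y y' : Fin m → α) : |G y - G y'| ≤ ∑ j, |g (y j) - g (y' j)| :=
      abs_integral_sub_integral_le ((hsecLp y).integrable one_le_two)
        ((hsecLp y').integrable one_le_two) fun a ↦ by simpa using hFg a a y y'
    calc Var[f; Measure.pi fun _ ↦ μ] = Var[F; μ.prod ν] :=
          (hmp.variance_fun_comp hf.aemeasurable).symm
      _ ≤ Var[g; μ] + Var[G; ν] :=
          variance_prod_le_add_variance_integral
            ((memLp_pi_of_abs_sub_le_sum hg hf.aestronglyMeasurable hfg).comp_measurePreserving hmp)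
            hsecLp (memLp_pi_of_abs_sub_le_sum hg hG.aestronglyMeasurable hGg)
            fun y ↦ variance_le_of_abs_sub_le_abs_sub hg (hsecm y) (hsec y)
      _ ≤ Var[g; μ] + m * Var[g; μ] :=
          add_le_add_right (variance_pi_fin_le_of_abs_sub_le_sum hg m G hG hGg) _
      _ = (m + 1 : ℕ) * Var[g; μ] := by push_cast; ring

theorem variance_pi_le_of_abs_sub_le_sum {ι : Type*} [Fintype ι] (hg : MemLp g 2 μ)
    {f : (ι → α) → ℝ} (hf : Measurable f) (hfg : ∀ x y, |f x - f y| ≤ ∑ i, |g (x i) - g (y i)|) :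
    Var[f; Measure.pi fun _ ↦ μ] ≤ Fintype.card ι * Var[g; μ] := by
  set e := (Fintype.equivFin ι).symm
  have hmp := measurePreserving_piCongrLeft (fun _ : ι ↦ μ) e
  rw [← hmp.variance_fun_comp hf.aemeasurable]
  refine variance_pi_fin_le_of_abs_sub_le_sum hg _ _ (hf.comp hmp.measurable) fun x y ↦ ?_
  refine (hfg _ _).trans_eq ?_
  rw [← e.sum_comp]
  simp [MeasurableEquiv.piCongrLeft]

end Tensorization

end ProbabilityTheory

lemma abs_csSup_image_sub_csSup_image_le {β : Type*} {S : Set β} (hS : S.Finite)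
    (hne : S.Nonempty) {F G : β → ℝ} {c : ℝ} (h : ∀ σ ∈ S, |F σ - G σ| ≤ c) :
    |sSup (F '' S) - sSup (G '' S)| ≤ c := by
  have hle {F G : β → ℝ} (h : ∀ σ ∈ S, F σ ≤ G σ + c) : sSup (F '' S) ≤ sSup (G '' S) + c :=
    csSup_le (hne.image F) <| Set.forall_mem_image.2 fun σ hσ ↦ by
      linarith [h σ hσ, le_csSup (hS.image G).bddAbove (Set.mem_image_of_mem G hσ)]
  have h₁ := hle (F := F) (G := G) fun σ hσ ↦ by linarith [(abs_sub_le_iff.1 (h σ hσ)).1]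
  have h₂ := hle (F := G) (G := F) fun σ hσ ↦ by linarith [(abs_sub_le_iff.1 (h σ hσ)).2]
  exact abs_sub_le_iff.2 ⟨by linarith, by linarith⟩

lemma abs_csInf_image_sub_csInf_image_le {β : Type*} {S : Set β} (hS : S.Finite)
    (hne : S.Nonempty) {F G : β → ℝ} {c : ℝ} (h : ∀ σ ∈ S, |F σ - G σ| ≤ c) :
    |sInf (F '' S) - sInf (G '' S)| ≤ c := by
  have hle {F G : β → ℝ} (h : ∀ σ ∈ S, G σ ≤ F σ + c) : sInf (G '' S) ≤ sInf (F '' S) + c := by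
    rw [← sub_le_iff_le_add]
    refine le_csInf (hne.image F) <| Set.forall_mem_image.2 fun σ hσ ↦ ?_
    linarith [h σ hσ, csInf_le (hS.image G).bddBelow (Set.mem_image_of_mem G hσ)]
  have h₁ := hle (F := F) (G := G) fun σ hσ ↦ by linarith [(abs_sub_le_iff.1 (h σ hσ)).2]
  have h₂ := hle (F := G) (G := F) fun σ hσ ↦ by linarith [(abs_sub_le_iff.1 (h σ hσ)).1]
  exact abs_sub_le_iff.2 ⟨by linarith, by linarith⟩

lemma abs_spin (b : Bool) : |spin b| = 1 := by cases b <;> simp [spin]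

lemma abs_HD_sub_HD_le {n : ℕ} (z z' : Fin n × Fin n → ℕ) (σ : Fin n → Bool) :
    |HD z σ - HD z' σ| ≤ ∑ p, |(z p : ℝ) - z' p| := by
  rw [HD, HD, neg_sub_neg, ← Finset.sum_sub_distrib]
  refine (Finset.abs_sum_le_sum_abs _ _).trans_eq (Finset.sum_congr rfl fun p _ ↦ ?_)
  rw [← sub_mul, ← sub_mul, abs_mul, abs_mul, abs_spin, abs_spin, mul_one, mul_one,
    abs_sub_comm]

lemma exists_balanced {n : ℕ} (hn : Even n) : ∃ σ : Fin n → Bool, balanced σ := by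
  obtain ⟨k, rfl⟩ := hn
  refine ⟨fun i ↦ decide ((i : ℕ) < k), ?_⟩
  simp [balanced, Fin.card_filter_val_lt]
  omega

/-- **Efron–Stein variance bound for the constrained ground-state energies**:
for every `γ > 0` and every even `n`, with `(z_{ij})` i.i.d. Poisson(γ/n),
`Var(U₋) ≤ nγ` and `Var(U₊) ≤ nγ`. -/
theorem efron_stein_variance_bound (γ : ℝ) (hγ : 0 < γ) (n : ℕ) (hn : Even n) :
    ProbabilityTheory.variance (fun z => Uminus z) (poissonProd n γ) ≤ n * γ
    ∧ ProbabilityTheory.variance (fun z => Uplus z) (poissonProd n γ) ≤ n * γ := by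
  have hvar {U : (Fin n × Fin n → ℕ) → ℝ}
      (hU : ∀ z z', |U z - U z'| ≤ ∑ p, |(z p : ℝ) - z' p|) : Var[U; poissonProd n γ] ≤ n * γ := by
    calc Var[U; poissonProd n γ]
        ≤ Fintype.card (Fin n × Fin n) * Var[fun k : ℕ ↦ (k : ℝ); Po((γ / n).toNNReal)] :=
          variance_pi_le_of_abs_sub_le_sum memLp_two_poissonMeasure_cast .of_discrete hU
      _ = n * γ := by
          rw [variance_poissonMeasure_cast, Real.coe_toNNReal _ (by positivity)]
          rcases eq_or_ne (n : ℝ) 0 with h | h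
          · simp [h]
          · simp only [Fintype.card_prod, Fintype.card_fin, Nat.cast_mul]
            field_simp
  have hS : {σ : Fin n → Bool | balanced σ}.Nonempty := exists_balanced hn
  exact ⟨hvar fun z z' ↦ abs_csInf_image_sub_csInf_image_le (Set.toFinite _) hS
      fun σ _ ↦ abs_HD_sub_HD_le z z' σ,
    hvar fun z z' ↦ abs_csSup_image_sub_csSup_image_le (Set.toFinite _) hS
      fun σ _ ↦ abs_HD_sub_HD_le z z' σ⟩
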